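/- arXiv:2308.09860 — 9 statements merged into one kernel-verified Lean document; each statement's English description precedes it below -/
import Mathlib

section
/- Let d ≥ 1 and k ≥ 1. Let q : Fin (k+1) → EuclideanSpace ℝ (Fin d) be a closed sequence of reference points with q k = q 0, and let g : Fin k → ℝ be gains with ∑ i, g i = 0. If the family of k−1 direction vectors (q (i+1) − q i) for i = 0, 1, …, k−2 is linearly independent over ℝ, then there exists a point x ∈ EuclideanSpace ℝ (Fin d) such that for every i : Fin k, dist(x, q i)² − dist(x, q (i+1))² = g i. (A balanced circle whose directions, excluding one edge, are linearly independent is central.) -/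
/-!
Since `dist x a ^ 2 - dist x b ^ 2 = 2 ⟪b - a, x⟫ + ‖a‖ ^ 2 - ‖b‖ ^ 2`, the equations of the first
`k - 1` edges prescribe the inner products of `x` with linearly independent vectors, which is
possible because their Gram matrix is invertible. Around the closed circle the left-hand sides of
all `k` equations telescope to `0`, and so do the balanced gains, so the equation of the last edge
follows from the others.
-/

open Finset Matrix
open scoped InnerProductSpace

theorem exists_inner_eq_of_linearIndependent {ι E : Type*} [Fintype ι]
    [NormedAddCommGroup E] [InnerProductSpace ℝ E] {v : ι → E} (hv : LinearIndependent ℝ v)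
    (c : ι → ℝ) : ∃ x : E, ∀ i, ⟪v i, x⟫_ℝ = c i := by
  classical
  obtain ⟨a, ha⟩ := mulVec_surjective_iff_isUnit.mpr
    (posDef_gram_of_linearIndependent hv).isUnit c
  refine ⟨∑ j, a j • v j, fun i => ?_⟩
  simp only [← ha, inner_sum, real_inner_smul_right, mulVec, dotProduct, gram_apply, mul_comm]

theorem dist_sq_sub_dist_sq_eq {E : Type*} [NormedAddCommGroup E] [InnerProductSpace ℝ E]
    (x a b : E) :
    dist x a ^ 2 - dist x b ^ 2 = 2 * ⟪b - a, x⟫_ℝ + ‖a‖ ^ 2 - ‖b‖ ^ 2 := by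
  rw [dist_eq_norm, dist_eq_norm, norm_sub_sq_real, norm_sub_sq_real, inner_sub_left,
    real_inner_comm x a, real_inner_comm x b]
  ring

theorem Fin.sum_succ_sub_castSucc_eq_zero {M : Type*} [AddCommGroup M] {n : ℕ}
    {f : Fin (n + 1) → M} (hf : f (Fin.last n) = f 0) :
    ∑ i : Fin n, (f i.succ - f i.castSucc) = 0 := by
  cases n with
  | zero => simp
  | succ n =>
    have := Fin.sum_Iic_sub (Fin.last n) f
    rwa [Fin.succ_last, hf, sub_self, ← Fin.top_eq_last, Finset.Iic_top] at this

theorem sum_dist_sq_sub_dist_sq_eq_zero {E : Type*} [PseudoMetricSpace E] {n : ℕ}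
    {q : Fin (n + 1) → E} (hq : q (Fin.last n) = q 0) (x : E) :
    ∑ i : Fin n, (dist x (q i.castSucc) ^ 2 - dist x (q i.succ) ^ 2) = 0 := by
  rw [← neg_eq_zero, ← sum_neg_distrib]
  simpa using Fin.sum_succ_sub_castSucc_eq_zero (f := fun j => dist x (q j) ^ 2) (by rw [hq])

/-- A balanced circle whose direction vectors, excluding one edge, are linearly independent is
central: if `q k = q 0`, `∑ i, g i = 0`, and the `k − 1` directions `q (i+1) − q i` for
`i = 0, …, k − 2` are linearly independent, then there is a common point `x` of all the
Pythagorean hyperplanes `dist(x, q i)² − dist(x, q (i+1))² = g i`. -/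
theorem central_of_balanced_of_linearIndependent
    (d k : ℕ) (hk : 1 ≤ k)
    (q : Fin (k + 1) → EuclideanSpace ℝ (Fin d)) (hq : q (Fin.last k) = q 0)
    (g : Fin k → ℝ) (hg : ∑ i, g i = 0)
    (hli : LinearIndependent ℝ (fun i : Fin (k - 1) =>
      q ⟨(i : ℕ) + 1, by have := i.isLt; omega⟩ - q ⟨(i : ℕ), by have := i.isLt; omega⟩)) :
    ∃ x : EuclideanSpace ℝ (Fin d),
      ∀ i : Fin k, dist x (q i.castSucc) ^ 2 - dist x (q i.succ) ^ 2 = g i := by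
  obtain ⟨m, rfl⟩ : ∃ m, k = m + 1 := ⟨k - 1, by omega⟩
  obtain ⟨x, hx⟩ := exists_inner_eq_of_linearIndependent hli fun i =>
    (g i.castSucc - ‖q i.castSucc.castSucc‖ ^ 2 + ‖q i.castSucc.succ‖ ^ 2) / 2
  have hfirst : ∀ i : Fin m,
      dist x (q i.castSucc.castSucc) ^ 2 - dist x (q i.castSucc.succ) ^ 2 = g i.castSucc := by
    intro i
    have hxi : ⟪q i.castSucc.succ - q i.castSucc.castSucc, x⟫_ℝ = _ := hx i
    rw [dist_sq_sub_dist_sq_eq, hxi]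
    ring
  refine ⟨x, fun i => ?_⟩
  induction i using Fin.lastCases with
  | cast i => exact hfirst i
  | last =>
    have hcircle := sum_dist_sq_sub_dist_sq_eq_zero hq x
    rw [Fin.sum_univ_castSucc, sum_congr rfl fun i _ => hfirst i] at hcircle
    rw [Fin.sum_univ_castSucc] at hg
    linarith
end

section
/- Let d ≥ 1 and 2 ≤ k ≤ d + 1. Let q : Fin k → EuclideanSpace ℝ (Fin d) be an affinely independent family of points (AffineIndependent ℝ q), and let g : Fin k → ℝ be gains with ∑ i, g i = 0. Then there exists a point x ∈ EuclideanSpace ℝ (Fin d) such that for every i : Fin k, dist(x, q i)² − dist(x, q (i+1))² = g i, where i+1 is taken cyclically in Fin k. (A balanced circle of length at most d+1 whose reference points are in affine general position is central.) -/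
/-!
Expanding the squares, the required identities say that `dist x (q i) ^ 2 = r i + C` for some
constant `C`, where `r` is a potential of the gains: `r i - r (i + 1) = g i` cyclically. Such a
potential exists because the gains sum to zero. For affinely independent points the differences
`dist x (q i) ^ 2 - dist x (q i₀) ^ 2` are affine in `x` with linearly independent linear parts
`-2 ⟪·, q i - q i₀⟫`, so they can be prescribed arbitrarily.
-/

open RealInnerProductSpace

theorem LinearIndependent.exists_forall_inner_eq {𝕜 ι E : Type*} [RCLike 𝕜] [Finite ι]
    [NormedAddCommGroup E] [InnerProductSpace 𝕜 E]
    {v : ι → E} (hv : LinearIndependent 𝕜 v) (a : ι → 𝕜) :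
    ∃ x : E, ∀ i, inner 𝕜 x (v i) = a i := by
  set K := Submodule.span 𝕜 (Set.range v)
  let b : Module.Basis ι 𝕜 K := .span hv
  have := Module.Finite.of_basis b
  have := FiniteDimensional.complete 𝕜 K
  let x : K := (InnerProductSpace.toDual 𝕜 K).symm (b.constr 𝕜 a).toContinuousLinearMap
  refine ⟨x, fun i => ?_⟩
  rw [← Module.Basis.coe_span_apply hv i, ← Submodule.coe_inner,
    InnerProductSpace.toDual_symm_apply]
  exact b.constr_basis 𝕜 a i

theorem Fin.exists_sub_finRotate_eq_of_sum_eq_zero {M : Type*} [AddCommGroup M] {n : ℕ}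
    (g : Fin (n + 1) → M) (hg : ∑ i, g i = 0) :
    ∃ r : Fin (n + 1) → M, ∀ i, r i - r (finRotate (n + 1) i) = g i := by
  have hlast : Fin.partialSum g (Fin.last (n + 1)) = ∑ i, g i := by
    rw [Fin.partialSum, Fin.val_last, List.take_of_length_le (by simp), List.sum_ofFn]
  refine ⟨fun i => -Fin.partialSum g i.castSucc, fun i => ?_⟩
  induction i using Fin.lastCases with
  | last =>
    rw [hg, ← Fin.succ_last, Fin.partialSum_succ] at hlast
    simp [eq_neg_of_add_eq_zero_left hlast]
  | cast j =>
    have : finRotate (n + 1) j.castSucc = j.succ := by ext; simp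
    simp only [this, ← Fin.succ_castSucc, Fin.partialSum_succ]
    abel

theorem AffineIndependent.exists_forall_dist_sq_eq_add {V P ι : Type*} [NormedAddCommGroup V]
    [InnerProductSpace ℝ V] [MetricSpace P] [NormedAddTorsor V P] [Finite ι] [Nonempty ι]
    {p : ι → P} (hp : AffineIndependent ℝ p) (r : ι → ℝ) :
    ∃ x : P, ∃ C : ℝ, ∀ i, dist x (p i) ^ 2 = r i + C := by
  obtain ⟨i₀⟩ := ‹Nonempty ι›
  have hv := (affineIndependent_iff_linearIndependent_vsub ℝ p i₀).mp hp
  obtain ⟨w, hw⟩ := hv.exists_forall_inner_eq fun i => (‖p i -ᵥ p i₀‖ ^ 2 - r i + r i₀) / 2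
  have hw' : ∀ i, ⟪w, p i -ᵥ p i₀⟫ = (‖p i -ᵥ p i₀‖ ^ 2 - r i + r i₀) / 2 := by
    intro i
    by_cases h : i = i₀
    · subst h; simp
    · exact hw ⟨i, h⟩
  refine ⟨w +ᵥ p i₀, ‖w‖ ^ 2 - r i₀, fun i => ?_⟩
  rw [dist_eq_norm_vsub V, vadd_vsub_assoc, ← neg_vsub_eq_vsub_rev, ← sub_eq_add_neg,
    norm_sub_sq_real, hw' i]
  ring

/-- A balanced circle of length at most `d + 1` whose reference points are affinely independent
is central: if `2 ≤ k ≤ d + 1`, the points `q : Fin k → ℝᵈ` are affinely independent, and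
`∑ i, g i = 0`, then there is a common point `x` of all the Pythagorean hyperplanes
`dist(x, q i)² − dist(x, q (i+1))² = g i`, where `i + 1` is taken cyclically in `Fin k`. -/
theorem central_of_balanced_of_affineIndependent
    (d k : ℕ) (hk : 2 ≤ k)
    (q : Fin k → EuclideanSpace ℝ (Fin d)) (hq : AffineIndependent ℝ q)
    (g : Fin k → ℝ) (hg : ∑ i, g i = 0) :
    ∃ x : EuclideanSpace ℝ (Fin d),
      ∀ i : Fin k,
        dist x (q i) ^ 2 - dist x (q ⟨((i : ℕ) + 1) % k, Nat.mod_lt _ (by omega)⟩) ^ 2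
          = g i := by
  obtain ⟨n, rfl⟩ := Nat.exists_eq_add_one_of_ne_zero (by omega : k ≠ 0)
  obtain ⟨r, hr⟩ := Fin.exists_sub_finRotate_eq_of_sum_eq_zero g hg
  obtain ⟨x, C, hx⟩ := hq.exists_forall_dist_sq_eq_add r
  refine ⟨x, fun i => ?_⟩
  have hnext : (⟨((i : ℕ) + 1) % (n + 1), Nat.mod_lt _ (by omega)⟩ : Fin (n + 1)) =
      finRotate (n + 1) i := by
    ext; simp [Fin.val_add]
  rw [hnext, hx, hx, ← hr i]
  ring
end

section
/- Let E be a type, v : E → EuclideanSpace ℝ (Fin d), and c : E → ℝ. Let X be a finite subset of E that is a circuit of v, and let α : E → ℝ be a nontrivial linear dependency supported on X, i.e. ∑_{e ∈ X} α e • v e = 0 and α e ≠ 0 for some e ∈ X. Then the linear system ⟪v e, x⟫ = c e (for all e ∈ X) has a solution x ∈ EuclideanSpace ℝ (Fin d) if and only if ∑_{e ∈ X} (α e) * (c e) = 0. -/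
/-!
If `x` solves the system on the circuit `X`, pairing the dependency `∑ α e • v e = 0` with `x`
gives `∑ α e * c e = 0`. Conversely, pick `e₀` with `α e₀ ≠ 0`: the vectors of `X \ {e₀}` are
linearly independent, so the system restricted to them is solvable, and the two relations
`∑ α e * ⟪v e, x⟫ = 0 = ∑ α e * c e` force the remaining equation at `e₀`.
-/

/-- `X` is a circuit of the family of vectors `v`: the family `(v e)_{e ∈ X}` is linearly
dependent, but `(v e)_{e ∈ X'}` is linearly independent for every proper subset `X' ⊊ X`. -/
def IsVecCircuit {E : Type*} {d : ℕ} (v : E → EuclideanSpace ℝ (Fin d)) (X : Finset E) : Prop :=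
  ¬ LinearIndependent ℝ (fun e : X => v e.1) ∧
    ∀ Y : Finset E, Y ⊂ X → LinearIndependent ℝ (fun e : Y => v e.1)

/-- A set `S` is central for the data `(v, c)` when the linear system
`⟪v e, x⟫ = c e` (for `e ∈ S`) has a common solution `x`. -/
def IsCentral {E : Type*} {d : ℕ} (v : E → EuclideanSpace ℝ (Fin d)) (c : E → ℝ)
    (S : Set E) : Prop :=
  ∃ x : EuclideanSpace ℝ (Fin d), ∀ e ∈ S, (inner ℝ (v e) x : ℝ) = c e

open Finset

section
variable {F : Type*} [NormedAddCommGroup F] [InnerProductSpace ℝ F]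

/-- The solution is the Riesz representative, in the finite-dimensional span of `w`, of the
functional taking the values `t` on the basis `w`. -/
lemma exists_inner_eq_of_linearIndependent_s3 {ι : Type*} [Finite ι] {w : ι → F}
    (hw : LinearIndependent ℝ w) (t : ι → ℝ) : ∃ x : F, ∀ i, inner ℝ (w i) x = t i := by
  let b := Module.Basis.span hw
  have : FiniteDimensional ℝ (Submodule.span ℝ (Set.range w)) := .of_basis b
  let φ : StrongDual ℝ (Submodule.span ℝ (Set.range w)) :=
    LinearMap.toContinuousLinearMap (b.constr ℝ t)
  refine ⟨↑((InnerProductSpace.toDual ℝ _).symm φ), fun i => ?_⟩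
  have hbi : (b i : F) = w i := by simp [b]
  rw [real_inner_comm, ← hbi, ← Submodule.coe_inner, InnerProductSpace.toDual_symm_apply]
  exact b.constr_basis ℝ t i

variable {E : Type*} {s : Finset E} {v : E → F} {α c : E → ℝ} {x : F}

lemma sum_mul_eq_zero_of_inner_eq (hα : ∑ e ∈ s, α e • v e = 0)
    (hx : ∀ e ∈ s, inner ℝ (v e) x = c e) : ∑ e ∈ s, α e * c e = 0 :=
  calc ∑ e ∈ s, α e * c e = inner ℝ (∑ e ∈ s, α e • v e) x := by
        simp only [sum_inner, real_inner_smul_left]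
        exact sum_congr rfl fun e he => by rw [hx e he]
    _ = 0 := by rw [hα, inner_zero_left]

lemma inner_eq_of_inner_eq_of_ne {e₀ : E} (he₀ : e₀ ∈ s) (hα₀ : α e₀ ≠ 0)
    (hα : ∑ e ∈ s, α e • v e = 0) (hc : ∑ e ∈ s, α e * c e = 0)
    (hx : ∀ e ∈ s, e ≠ e₀ → inner ℝ (v e) x = c e) : inner ℝ (v e₀) x = c e₀ := by
  have hsum : ∑ e ∈ s, α e * (inner ℝ (v e) x - c e) = 0 := by
    simp only [mul_sub, sum_sub_distrib, hc, sub_zero]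
    exact sum_mul_eq_zero_of_inner_eq hα fun _ _ => rfl
  rw [sum_eq_single_of_mem e₀ he₀ fun e he hne => by rw [hx e he hne, sub_self, mul_zero]]
    at hsum
  exact sub_eq_zero.1 ((mul_eq_zero.1 hsum).resolve_left hα₀)

end

/-- A circuit `X` of `v` is central for `(v, c)` if and only if any nontrivial linear
dependency `α` supported on `X` satisfies `∑_{e ∈ X} α e * c e = 0`. -/
theorem central_circuit_iff_dependency_orthogonal
    {E : Type*} {d : ℕ} (v : E → EuclideanSpace ℝ (Fin d)) (c : E → ℝ)
    (X : Finset E) (hX : IsVecCircuit v X)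
    (α : E → ℝ) (hα : ∑ e ∈ X, α e • v e = 0) (hnt : ∃ e ∈ X, α e ≠ 0) :
    IsCentral v c X ↔ ∑ e ∈ X, α e * c e = 0 := by
  classical
  refine ⟨fun ⟨x, hx⟩ => sum_mul_eq_zero_of_inner_eq hα hx, fun hc => ?_⟩
  obtain ⟨e₀, he₀, hα₀⟩ := hnt
  obtain ⟨x, hx⟩ := exists_inner_eq_of_linearIndependent_s3
    (hX.2 _ (erase_ssubset he₀)) fun e => c e.1
  have hx_ne : ∀ e ∈ X, e ≠ e₀ → inner ℝ (v e) x = c e :=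
    fun e he hne => hx ⟨e, mem_erase.2 ⟨hne, he⟩⟩
  refine ⟨x, fun e he => ?_⟩
  rcases eq_or_ne e e₀ with rfl | hne
  · exact inner_eq_of_inner_eq_of_ne he₀ hα₀ hα hc hx_ne
  · exact hx_ne e he hne
end

section
/- Let E be a type, v : E → EuclideanSpace ℝ (Fin d), c : E → ℝ, and let S ⊆ E be a finite subset. Then S is central (i.e. there exists x with ⟪v e, x⟫ = c e for all e ∈ S) if and only if every circuit X of v with X ⊆ S is central. -/
/-! If the vectors `v e`, `e ∈ S`, are independent, the system is solvable outright: the functional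
`g ↦ ∑ g e * c e` factors through the injective map `g ↦ ∑ g e • v e`, and Riesz representation turns
the factor into a solution. Otherwise `S` contains a circuit `X`; for `e ∈ X`, `v e` lies in the span of
the other vectors of `X`, so a solution on `S \ {e}` (which exists by induction) agrees on `v e` with a
solution on `X`, and hence is a solution on all of `S`. -/

open Submodule InnerProductSpace

theorem inner_eq_inner_of_mem_span {𝕜 V : Type*} [RCLike 𝕜] [NormedAddCommGroup V]
    [InnerProductSpace 𝕜 V] {s : Set V} {x y u : V} (h : ∀ w ∈ s, inner 𝕜 w x = inner 𝕜 w y)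
    (hu : u ∈ span 𝕜 s) : inner 𝕜 u x = inner 𝕜 u y := by
  have hs : span 𝕜 s ≤ (𝕜 ∙ (x - y))ᗮ := span_le.2 fun w hw => by
    rw [SetLike.mem_coe, mem_orthogonal_singleton_iff_inner_left, inner_sub_right, h w hw, sub_self]
  rw [← sub_eq_zero, ← inner_sub_right, ← mem_orthogonal_singleton_iff_inner_left]
  exact hs hu

theorem LinearIndependent.exists_inner_eq {ι V : Type*} [NormedAddCommGroup V]
    [InnerProductSpace ℝ V] [FiniteDimensional ℝ V] {w : ι → V} (hw : LinearIndependent ℝ w)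
    (c : ι → ℝ) : ∃ x : V, ∀ i, inner ℝ (w i) x = c i := by
  obtain ⟨φ, hφ⟩ := LinearMap.dualMap_surjective_of_injective hw (Finsupp.linearCombination ℝ c)
  refine ⟨(toDual ℝ V).symm (LinearMap.toContinuousLinearMap φ), fun i => ?_⟩
  rw [real_inner_comm, toDual_symm_apply]
  simpa using LinearMap.congr_fun hφ (Finsupp.single i 1)

section Circuits

variable {E : Type*} {d : ℕ} {v : E → EuclideanSpace ℝ (Fin d)}

theorem IsVecCircuit.nonempty {X : Finset E} (hX : IsVecCircuit v X) : X.Nonempty := by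
  rw [Finset.nonempty_iff_ne_empty]
  rintro rfl
  exact hX.1 linearIndependent_empty_type

theorem IsVecCircuit.mem_span_erase [DecidableEq E] {X : Finset E} (hX : IsVecCircuit v X) {e : E}
    (he : e ∈ X) : v e ∈ span ℝ (v '' (X.erase e : Set E)) := by
  by_contra h
  have := LinearIndepOn.insert (hX.2 _ (Finset.erase_ssubset he)) h
  rw [← Finset.coe_insert, Finset.insert_erase he] at this
  exact hX.1 this

theorem exists_isVecCircuit_subset {S : Finset E}
    (hS : ¬ LinearIndependent ℝ (fun e : S => v e.1)) : ∃ X ⊆ S, IsVecCircuit v X := by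
  obtain ⟨X, hXS, hXdep, hXmin⟩ := exists_minimal_le_of_wellFoundedLT
    (fun X : Finset E => ¬ LinearIndependent ℝ (fun e : X => v e.1)) S hS
  exact ⟨X, hXS, hXdep, fun Y hYX => by_contra fun hY => hYX.not_ge (hXmin hY hYX.le)⟩

variable {c : E → ℝ}

theorem IsCentral.insert_of_isVecCircuit [DecidableEq E] {T : Set E} {X : Finset E} {e : E}
    (hT : IsCentral v c T) (hX : IsVecCircuit v X) (hXc : IsCentral v c X) (he : e ∈ X)
    (hXT : ↑(X.erase e) ⊆ T) : IsCentral v c (insert e T) := by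
  obtain ⟨x, hx⟩ := hT
  obtain ⟨y, hy⟩ := hXc
  refine ⟨x, Set.forall_mem_insert.2 ⟨?_, hx⟩⟩
  have hxy : ∀ w ∈ v '' (X.erase e : Set E), inner ℝ w x = inner ℝ w y := by
    rintro _ ⟨f, hf, rfl⟩
    rw [hx f (hXT hf), hy f (Finset.mem_of_mem_erase hf)]
  rw [inner_eq_inner_of_mem_span hxy (hX.mem_span_erase he), hy e he]

end Circuits

/-- A finite set `S` is central if and only if every circuit of `v` contained in `S`
is central. -/
theorem central_iff_circuits_central
    {E : Type*} {d : ℕ} (v : E → EuclideanSpace ℝ (Fin d)) (c : E → ℝ) (S : Finset E) :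
    IsCentral v c S ↔
      ∀ X : Finset E, IsVecCircuit v X → X ⊆ S → IsCentral v c X := by
  classical
  refine ⟨fun ⟨x, hx⟩ X _ hXS => ⟨x, fun e he => hx e (hXS he)⟩, fun h => ?_⟩
  induction S using Finset.strongInduction with
  | H S ih =>
  by_cases hS : LinearIndependent ℝ (fun e : S => v e.1)
  · obtain ⟨x, hx⟩ := hS.exists_inner_eq (fun e => c e)
    exact ⟨x, fun e he => hx ⟨e, he⟩⟩
  obtain ⟨X, hXS, hX⟩ := exists_isVecCircuit_subset hS
  obtain ⟨e, he⟩ := hX.nonempty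
  have hcentral : IsCentral v c ↑(S.erase e) := ih _ (Finset.erase_ssubset (hXS he))
    fun Y hY hYS => h Y hY (hYS.trans (Finset.erase_subset e S))
  have := hcentral.insert_of_isVecCircuit hX (h X hX hXS) he
    (Finset.coe_subset.2 (Finset.erase_subset_erase e hXS))
  rwa [← Finset.coe_insert, Finset.insert_erase (hXS he)] at this
end

section
/- Let E be a type, v : E → EuclideanSpace ℝ (Fin d), and c : E → ℝ. Let X and Y be distinct circuits of v forming a modular pair, i.e. the dimension (finrank over ℝ) of the span of {v e : e ∈ X ∪ Y} equals |X ∪ Y| − 2. If both X and Y are central, then every circuit Z of v with Z ⊆ X ∪ Y is central. (The central circuits of a Pythagorean arrangement form a linear class of circuits.) -/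
/-!
A set `S` is central exactly when every linear relation among the `v e`, `e ∈ S`, is also a
relation among the `c e` (Fredholm alternative, via Riesz representation). For a modular pair,
rank–nullity makes the relation space of `X ∪ Y` two-dimensional; it contains the relations of
the circuits `X` and `Y`, which are independent because their supports are `X ≠ Y`. So every
relation on `X ∪ Y`, in particular every relation on `Z ⊆ X ∪ Y`, is a combination of relations
that `c` satisfies.
-/

open Finsupp Module

theorem LinearMap.exists_comp_eq_of_ker_le {K V W U : Type*} [Field K] [AddCommGroup V]
    [Module K V] [AddCommGroup W] [Module K W] [AddCommGroup U] [Module K U]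
    (f : V →ₗ[K] W) (g : V →ₗ[K] U) (h : LinearMap.ker f ≤ LinearMap.ker g) :
    ∃ g' : W →ₗ[K] U, g' ∘ₗ f = g := by
  obtain ⟨g', hg'⟩ :=
    ((LinearMap.ker f).liftQ g h ∘ₗ f.quotKerEquivRange.symm.toLinearMap).exists_extend
  refine ⟨g', LinearMap.ext fun x => ?_⟩
  have := LinearMap.congr_fun hg' ⟨f x, LinearMap.mem_range_self f x⟩
  simpa only [LinearMap.comp_apply, LinearEquiv.coe_coe, Submodule.subtype_apply,
    LinearMap.quotKerEquivRange_symm_apply_image, Submodule.mkQ_apply,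
    Submodule.liftQ_apply] using this

section LinearRelations

variable (K : Type*) {M E : Type*} [Field K] [AddCommGroup M] [Module K M]

noncomputable def linearRelations (v : E → M) (S : Set E) : Submodule K (E →₀ K) :=
  supported K K S ⊓ LinearMap.ker (linearCombination K v)

variable {K} {v : E → M}

theorem linearRelations_mono {S T : Set E} (h : S ⊆ T) :
    linearRelations K v S ≤ linearRelations K v T :=
  inf_le_inf_right _ (supported_mono h)

theorem linearIndepOn_iff_linearRelations_eq_bot {S : Set E} :
    LinearIndepOn K v S ↔ linearRelations K v S = ⊥ := by
  rw [linearIndepOn_iff, Submodule.eq_bot_iff]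
  exact ⟨fun h l hl => h l hl.1 hl.2, fun h l hS hv => h l ⟨hS, hv⟩⟩

theorem finiteDimensional_supported (S : Finset E) :
    FiniteDimensional K (supported K K (S : Set E)) :=
  Module.Finite.equiv (supportedEquivFinsupp (S : Set E)).symm

theorem finiteDimensional_linearRelations (S : Finset E) :
    FiniteDimensional K (linearRelations K v S) :=
  have := finiteDimensional_supported (K := K) S
  Submodule.finiteDimensional_of_le inf_le_left

theorem finrank_linearRelations_add_finrank_span (S : Finset E) :
    finrank K (linearRelations K v S) + finrank K (Submodule.span K (v '' S)) = S.card := by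
  have := finiteDimensional_supported (K := K) S
  have hker : ((linearCombination K v).domRestrict (supported K K (S : Set E))).ker.map
      (supported K K (S : Set E)).subtype = linearRelations K v S := by
    rw [LinearMap.ker_domRestrict, Submodule.map_comap_subtype]; rfl
  rw [← hker, Submodule.finrank_map_subtype_eq, span_image_eq_map_linearCombination,
    ← LinearMap.range_domRestrict, add_comm, LinearMap.finrank_range_add_finrank_ker (V₂ := M)
      (V := supported K K (S : Set E)), (supportedEquivFinsupp (S : Set E)).finrank_eq]
  simp

end LinearRelations

section Circuits

variable {E : Type*} {d : ℕ} {v : E → EuclideanSpace ℝ (Fin d)} {X : Finset E}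

theorem IsVecCircuit.linearRelations_ne_bot (hX : IsVecCircuit v X) :
    linearRelations ℝ v X ≠ ⊥ :=
  fun h => hX.1 (linearIndepOn_iff_linearRelations_eq_bot.mpr h)

theorem IsVecCircuit.support_eq {l : E →₀ ℝ} (hX : IsVecCircuit v X)
    (hl : l ∈ linearRelations ℝ v X) (hl0 : l ≠ 0) : l.support = X := by
  refine (Finset.coe_subset.mp hl.1).eq_of_not_ssubset fun hssub => hl0 ?_
  have hbot := linearIndepOn_iff_linearRelations_eq_bot.mp (hX.2 _ hssub)
  exact (Submodule.eq_bot_iff _).mp hbot l ⟨mem_supported_support ℝ l, hl.2⟩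

theorem IsVecCircuit.linearIndependent_pair {Y : Finset E} {lX lY : E →₀ ℝ}
    (hX : IsVecCircuit v X) (hY : IsVecCircuit v Y) (hXY : X ≠ Y)
    (hlX : lX ∈ linearRelations ℝ v X) (hlX0 : lX ≠ 0)
    (hlY : lY ∈ linearRelations ℝ v Y) (hlY0 : lY ≠ 0) :
    LinearIndependent ℝ ![lX, lY] := by
  refine (LinearIndependent.pair_iff' hlX0).mpr fun a ha => ?_
  rcases eq_or_ne a 0 with rfl | ha0
  · exact hlY0 (by simpa using ha.symm)
  · apply hXY
    rw [← hX.support_eq hlX hlX0, ← hY.support_eq hlY hlY0, ← ha, support_smul_eq ha0]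

theorem IsVecCircuit.linearRelations_union_eq_sup [DecidableEq E] {Y : Finset E}
    (hX : IsVecCircuit v X) (hY : IsVecCircuit v Y) (hXY : X ≠ Y)
    (hmod : finrank ℝ (Submodule.span ℝ (v '' ↑(X ∪ Y))) = (X ∪ Y).card - 2) :
    linearRelations ℝ v ↑(X ∪ Y) = linearRelations ℝ v X ⊔ linearRelations ℝ v Y := by
  obtain ⟨lX, hlX, hlX0⟩ := Submodule.exists_mem_ne_zero_of_ne_bot hX.linearRelations_ne_bot
  obtain ⟨lY, hlY, hlY0⟩ := Submodule.exists_mem_ne_zero_of_ne_bot hY.linearRelations_ne_bot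
  have hle : linearRelations ℝ v X ⊔ linearRelations ℝ v Y ≤ linearRelations ℝ v ↑(X ∪ Y) :=
    sup_le (linearRelations_mono (by simp)) (linearRelations_mono (by simp))
  have hpair : Submodule.span ℝ (Set.range ![lX, lY]) ≤
      linearRelations ℝ v X ⊔ linearRelations ℝ v Y := by
    rw [Submodule.span_le, Set.range_subset_iff, Fin.forall_fin_two]
    exact ⟨Submodule.mem_sup_left hlX, Submodule.mem_sup_right hlY⟩
  have := finiteDimensional_linearRelations (K := ℝ) (v := v) (X ∪ Y)
  have := Submodule.finiteDimensional_of_le hle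
  have htwo_le := Submodule.finrank_mono hpair
  rw [finrank_span_eq_card (hX.linearIndependent_pair hY hXY hlX hlX0 hlY hlY0),
    Fintype.card_fin] at htwo_le
  have hrank := finrank_linearRelations_add_finrank_span (K := ℝ) (v := v) (X ∪ Y)
  exact (Submodule.eq_of_le_of_finrank_le hle (by omega)).symm

end Circuits

theorem isCentral_iff_linearRelations_le {E : Type*} {d : ℕ}
    {v : E → EuclideanSpace ℝ (Fin d)} {c : E → ℝ} {S : Set E} :
    IsCentral v c S ↔ linearRelations ℝ v S ≤ LinearMap.ker (linearCombination ℝ c) := by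
  constructor
  · rintro ⟨x, hx⟩ l hl
    obtain ⟨hlS, hlv⟩ := Submodule.mem_inf.mp hl
    rw [LinearMap.mem_ker] at hlv ⊢
    calc linearCombination ℝ c l = linearCombination ℝ (fun e => inner ℝ x (v e)) l := by
          simp only [linearCombination_apply]
          exact Finsupp.sum_congr fun e he => by rw [real_inner_comm, hx e (hlS he)]
      _ = inner ℝ x (linearCombination ℝ v l) :=
          (apply_linearCombination ℝ (innerₗ _ x) v l).symm
      _ = 0 := by rw [hlv, inner_zero_right]
  · intro h
    obtain ⟨g, hg⟩ := LinearMap.exists_comp_eq_of_ker_le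
      ((linearCombination ℝ v).domRestrict (supported ℝ ℝ S))
      ((linearCombination ℝ c).domRestrict (supported ℝ ℝ S))
      fun (l : supported ℝ ℝ S) hl => h ⟨l.2, hl⟩
    refine ⟨(InnerProductSpace.toDual ℝ _).symm g.toContinuousLinearMap, fun e he => ?_⟩
    have := LinearMap.congr_fun hg ⟨single e 1, single_mem_supported ℝ 1 he⟩
    rw [real_inner_comm, InnerProductSpace.toDual_symm_apply]
    simpa using this

/-- If distinct circuits `X` and `Y` of `v` form a modular pair (the span of the vectors
indexed by `X ∪ Y` has dimension `|X ∪ Y| - 2`) and both are central, then every circuit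
`Z ⊆ X ∪ Y` is central: central circuits form a linear class. -/
theorem central_circuits_linear_class
    {E : Type*} [DecidableEq E] {d : ℕ} (v : E → EuclideanSpace ℝ (Fin d)) (c : E → ℝ)
    (X Y : Finset E) (hXY : X ≠ Y)
    (hX : IsVecCircuit v X) (hY : IsVecCircuit v Y)
    (hmod : Module.finrank ℝ (Submodule.span ℝ (v '' ↑(X ∪ Y))) = (X ∪ Y).card - 2)
    (hXc : IsCentral v c X) (hYc : IsCentral v c Y) :
    ∀ Z : Finset E, IsVecCircuit v Z → Z ⊆ X ∪ Y → IsCentral v c Z := by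
  intro Z _ hZ
  rw [isCentral_iff_linearRelations_le] at hXc hYc ⊢
  calc linearRelations ℝ v Z ≤ linearRelations ℝ v ↑(X ∪ Y) := linearRelations_mono hZ
    _ = linearRelations ℝ v X ⊔ linearRelations ℝ v Y :=
      hX.linearRelations_union_eq_sup hY hXY hmod
    _ ≤ _ := sup_le hXc hYc
end

section
/- (Three-term Plücker relations.) Let n ≥ 2 and let e : Fin (n−2) → (Fin n → ℝ) be a family of row vectors. For x, y : Fin n → ℝ, write [x, y; e] for the determinant of the n × n matrix whose rows are x, y, e 0, e 1, …, e (n−3) in this order. Then for all a, b, c, d : Fin n → ℝ, [a, b; e]·[c, d; e] − [a, c; e]·[b, d; e] + [a, d; e]·[b, c; e] = 0. -/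
/-- The bracket `[x, y; e]`: the determinant of the `n × n` matrix whose rows are
`x, y, e 0, e 1, …, e (n − 3)` in this order. -/
noncomputable def bracket {n : ℕ} (hn : 2 ≤ n) (e : Fin (n - 2) → Fin n → ℝ)
    (x y : Fin n → ℝ) : ℝ :=
  Matrix.det (Matrix.of fun i : Fin n =>
    if h0 : (i : ℕ) = 0 then x
    else if h1 : (i : ℕ) = 1 then y
    else e ⟨(i : ℕ) - 2, by have := i.isLt; omega⟩)

/-!
`[x, y; e]` is an alternating bilinear form in `(x, y)` which vanishes as soon as `x` lies in the
span of the `e k`; hence its rank is at most `2` (it is zero if the `e k` are dependent). For an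
alternating form `B` of rank at most `2`, the functionals `B a`, `B b`, `B c` satisfy a nontrivial
linear relation, and substituting it into the three-term expression makes it cancel.
-/

namespace LinearMap.IsAlt

variable {K V : Type*} [Field K] [AddCommGroup V] [Module K V] {B : V →ₗ[K] V →ₗ[K] K}

theorem plucker_of_relation (hB : B.IsAlt) {a b c : V} {g : Fin 3 → K} (hg : g ≠ 0)
    (hrel : g 0 • B a + g 1 • B b + g 2 • B c = 0) (d : V) :
    B a b * B c d - B a c * B b d + B a d * B b c = 0 := by
  have L (y : V) : g 0 * B a y + g 1 * B b y + g 2 * B c y = 0 := by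
    simpa using LinearMap.congr_fun hrel y
  have skew (x y : V) : B y x = -B x y := (hB.neg x y).symm
  obtain ⟨i, hi⟩ := Function.ne_iff.mp hg
  refine (mul_eq_zero.mp ?_).resolve_left hi
  -- `g i` times the expression is a combination of the relation evaluated at the vectors other
  -- than the `i`-th one, up to alternation of `B`
  fin_cases i <;> simp only [Fin.zero_eta, Fin.mk_one, Fin.reduceFinMk, Fin.isValue]
  · linear_combination B c d * L b - B b d * L c + B b c * L d - g 2 * B c d * skew b c
      - g 1 * B c d * hB b + g 2 * B b d * hB c
  · linear_combination -(B c d * L a - B a d * L c + B a c * L d) + g 1 * B c d * skew a b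
      + g 2 * B c d * skew a c + g 0 * B c d * hB a - g 2 * B a d * hB c
  · linear_combination B b d * L a - B a d * L b + B a b * L d - g 2 * B b d * skew a c
      + g 2 * B a d * skew b c - g 1 * B b d * skew a b - g 0 * B b d * hB a + g 1 * B a d * hB b

theorem plucker_of_finrank_range_le_two [FiniteDimensional K V] (hB : B.IsAlt)
    (hrank : Module.finrank K (LinearMap.range B) ≤ 2) (a b c d : V) :
    B a b * B c d - B a c * B b d + B a d * B b c = 0 := by
  have hdep : ¬ LinearIndependent K (B ∘ ![a, b, c]) := fun h => by
    have hspan : Submodule.span K (Set.range (B ∘ ![a, b, c])) ≤ LinearMap.range B := by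
      rw [Submodule.span_le, Set.range_comp]
      exact Set.image_subset_range _ _
    have := (finrank_span_eq_card h).symm.trans_le ((Submodule.finrank_mono hspan).trans hrank)
    simp at this
  obtain ⟨g, hrel, i, hi⟩ := Fintype.not_linearIndependent_iff.mp hdep
  exact hB.plucker_of_relation (Function.ne_iff.mpr ⟨i, hi⟩)
    (by simpa [Fin.sum_univ_three] using hrel) d

end LinearMap.IsAlt

section BracketMatrix

variable {n : ℕ} (e : Fin (n - 2) → Fin n → ℝ)

def bracketMatrix (x y : Fin n → ℝ) : Matrix (Fin n) (Fin n) ℝ :=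
  Matrix.of fun i : Fin n =>
    if h0 : (i : ℕ) = 0 then x
    else if h1 : (i : ℕ) = 1 then y
    else e ⟨(i : ℕ) - 2, by have := i.isLt; omega⟩

theorem bracket_eq_det (hn : 2 ≤ n) (x y : Fin n → ℝ) :
    bracket hn e x y = (bracketMatrix e x y).det := rfl

theorem bracketMatrix_row_zero (hn : 2 ≤ n) (x y : Fin n → ℝ) :
    bracketMatrix e x y ⟨0, by omega⟩ = x := by
  funext j
  simp [bracketMatrix]

theorem bracketMatrix_row_one (hn : 2 ≤ n) (x y : Fin n → ℝ) :
    bracketMatrix e x y ⟨1, by omega⟩ = y := by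
  funext j
  simp [bracketMatrix]

theorem bracketMatrix_row_add_two (x y : Fin n → ℝ) (k : Fin (n - 2)) :
    bracketMatrix e x y ⟨k + 2, by omega⟩ = e k := by
  funext j
  simp [bracketMatrix]

theorem updateRow_zero_bracketMatrix (hn : 2 ≤ n) (x x' y : Fin n → ℝ) :
    (bracketMatrix e x y).updateRow ⟨0, by omega⟩ x' = bracketMatrix e x' y := by
  ext i : 1
  rcases eq_or_ne i ⟨0, by omega⟩ with rfl | hi
  · simp [bracketMatrix_row_zero e hn]
  · have : (i : ℕ) ≠ 0 := fun h => hi (Fin.ext h)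
    simp [Matrix.updateRow_ne hi, bracketMatrix, this]

theorem updateRow_one_bracketMatrix (hn : 2 ≤ n) (x y y' : Fin n → ℝ) :
    (bracketMatrix e x y).updateRow ⟨1, by omega⟩ y' = bracketMatrix e x y' := by
  ext i : 1
  rcases eq_or_ne i ⟨1, by omega⟩ with rfl | hi
  · simp [bracketMatrix_row_one e hn]
  · have : (i : ℕ) ≠ 1 := fun h => hi (Fin.ext h)
    simp [Matrix.updateRow_ne hi, bracketMatrix, this]

theorem bracket_eq_det_updateRow_zero (hn : 2 ≤ n) (x y : Fin n → ℝ) :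
    bracket hn e x y = ((bracketMatrix e 0 y).updateRow ⟨0, by omega⟩ x).det := by
  rw [updateRow_zero_bracketMatrix e hn, bracket_eq_det]

theorem bracket_eq_det_updateRow_one (hn : 2 ≤ n) (x y : Fin n → ℝ) :
    bracket hn e x y = ((bracketMatrix e x 0).updateRow ⟨1, by omega⟩ y).det := by
  rw [updateRow_one_bracketMatrix e hn, bracket_eq_det]

end BracketMatrix

section BracketForm

variable {n : ℕ} (hn : 2 ≤ n) (e : Fin (n - 2) → Fin n → ℝ)

noncomputable def bracketForm : (Fin n → ℝ) →ₗ[ℝ] (Fin n → ℝ) →ₗ[ℝ] ℝ :=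
  LinearMap.mk₂ ℝ (bracket hn e)
    (fun x x' y => by simp only [bracket_eq_det_updateRow_zero e hn, Matrix.det_updateRow_add])
    (fun r x y => by simp only [bracket_eq_det_updateRow_zero e hn, Matrix.det_updateRow_smul,
      smul_eq_mul])
    (fun x y y' => by simp only [bracket_eq_det_updateRow_one e hn, Matrix.det_updateRow_add])
    (fun r x y => by simp only [bracket_eq_det_updateRow_one e hn, Matrix.det_updateRow_smul,
      smul_eq_mul])

theorem bracketForm_apply (x y : Fin n → ℝ) : bracketForm hn e x y = bracket hn e x y := rfl

theorem bracketForm_isAlt : (bracketForm hn e).IsAlt := fun x => by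
  rw [bracketForm_apply, bracket_eq_det]
  refine Matrix.det_zero_of_row_eq (i := ⟨0, by omega⟩) (j := ⟨1, by omega⟩) (by simp) ?_
  rw [bracketMatrix_row_zero e hn, bracketMatrix_row_one e hn]

theorem span_le_ker_bracketForm :
    Submodule.span ℝ (Set.range e) ≤ LinearMap.ker (bracketForm hn e) := by
  rw [Submodule.span_le]
  rintro _ ⟨k, rfl⟩
  refine LinearMap.ext fun y => ?_
  rw [bracketForm_apply, bracket_eq_det, LinearMap.zero_apply]
  refine Matrix.det_zero_of_row_eq (i := ⟨0, by omega⟩) (j := ⟨k + 2, by omega⟩)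
    (by simp) ?_
  rw [bracketMatrix_row_zero e hn, bracketMatrix_row_add_two]

theorem bracketForm_eq_zero_of_not_linearIndependent (he : ¬ LinearIndependent ℝ e) :
    bracketForm hn e = 0 := by
  refine LinearMap.ext₂ fun x y => ?_
  rw [bracketForm_apply, bracket_eq_det, LinearMap.zero_apply, LinearMap.zero_apply]
  refine Matrix.det_eq_zero_of_not_linearIndependent_rows fun hrows => he ?_
  have hinj : Function.Injective fun k : Fin (n - 2) => (⟨k + 2, by omega⟩ : Fin n) :=
    fun k k' h => by simpa [Fin.ext_iff] using h
  simpa [Function.comp_def, bracketMatrix_row_add_two] using hrows.comp _ hinj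

theorem finrank_range_bracketForm_le_two :
    Module.finrank ℝ (LinearMap.range (bracketForm hn e)) ≤ 2 := by
  have hsum := LinearMap.finrank_range_add_finrank_ker (bracketForm hn e)
  rw [Module.finrank_fin_fun] at hsum
  by_cases he : LinearIndependent ℝ e
  · have := Submodule.finrank_mono (span_le_ker_bracketForm hn e)
    rw [finrank_span_eq_card he, Fintype.card_fin] at this
    omega
  · rw [bracketForm_eq_zero_of_not_linearIndependent hn e he, LinearMap.range_zero, finrank_bot]
    omega

end BracketForm

/-- The three-term Plücker relations:
`[a, b; e]·[c, d; e] − [a, c; e]·[b, d; e] + [a, d; e]·[b, c; e] = 0`. -/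
theorem plucker_three_term
    {n : ℕ} (hn : 2 ≤ n) (e : Fin (n - 2) → Fin n → ℝ) (a b c d : Fin n → ℝ) :
    bracket hn e a b * bracket hn e c d
      - bracket hn e a c * bracket hn e b d
      + bracket hn e a d * bracket hn e b c = 0 :=
  (bracketForm_isAlt hn e).plucker_of_finrank_range_le_two
    (finrank_range_bracketForm_le_two hn e) a b c d
end

section
/- Let M be a matroid on a finite ground set E and let I be a nonempty downward-closed family of subsets of E (an order ideal). Then the following are equivalent: (1) I is a modular ideal of M, i.e. {e} ∈ I for every non-loop e of M and A ∪ B ∈ I for every modular pair A, B ∈ I; (2) the set I ∩ 𝒞(M) of circuits of M belonging to I is a linear class of circuits of M, every independent set of M belongs to I, and I satisfies modular extension by circuits. -/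
open Set

/-- The rank of a set `S` in a matroid `M`: the largest cardinality of an independent
subset of `S`. -/
noncomputable def Matroid.rk' {α : Type*} (M : Matroid α) (S : Set α) : ℕ :=
  sSup (Set.ncard '' {I : Set α | M.Indep I ∧ I ⊆ S})

/-- A circuit of `M`: a minimal dependent set, i.e. a dependent set all of whose proper
subsets are independent. -/
def Matroid.IsCircuit' {α : Type*} (M : Matroid α) (C : Set α) : Prop :=
  M.Dep C ∧ ∀ D : Set α, D ⊂ C → M.Indep D

/-- `S` and `T` form a modular pair in `M`: `rk(S ∩ T) + rk(S ∪ T) = rk S + rk T`. -/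
def Matroid.ModularPairSets {α : Type*} (M : Matroid α) (S T : Set α) : Prop :=
  M.rk' (S ∩ T) + M.rk' (S ∪ T) = M.rk' S + M.rk' T

/-- A modular ideal of `M`: a nonempty downward-closed family of subsets containing `{e}`
for every non-loop `e` and closed under unions of modular pairs. -/
def Matroid.ModularIdeal {α : Type*} (M : Matroid α) (I : Set (Set α)) : Prop :=
  I.Nonempty ∧ (∀ A B : Set α, A ⊆ B → B ∈ I → A ∈ I) ∧
    (∀ e : α, M.Indep {e} → {e} ∈ I) ∧
    (∀ A B : Set α, A ∈ I → B ∈ I → M.ModularPairSets A B → A ∪ B ∈ I)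

/-- A linear class of circuits of `M`: a set `L` of circuits such that whenever
`X, Y ∈ L` form a modular pair, every circuit `Z ⊆ X ∪ Y` belongs to `L`. -/
def Matroid.LinearClass {α : Type*} (M : Matroid α) (L : Set (Set α)) : Prop :=
  (∀ C ∈ L, M.IsCircuit' C) ∧
    ∀ X ∈ L, ∀ Y ∈ L, M.ModularPairSets X Y →
      ∀ Z : Set α, M.IsCircuit' Z → Z ⊆ X ∪ Y → Z ∈ L

/-- `I` satisfies modular extension by circuits. -/
def Matroid.ModExtByCircuits {α : Type*} (M : Matroid α) (I : Set (Set α)) : Prop :=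
  ∀ X ∈ I, M.IsCircuit' X → ∀ S ∈ I, ∀ e : α, e ∈ X → X ⊆ S ∪ {e} → S ∪ {e} ∈ I

/-!
For a finite matroid, `rk'` is `eRk`. A modular ideal contains every independent set, built up
one element at a time since `{e}, S` is a modular pair whenever `insert e S` is independent; and
a circuit `X ⊆ insert e S` with `e ∈ X` forms a modular pair with `S`, which gives extension by
circuits. Conversely, let `A, B ∈ I` be a modular pair with `A ∪ B` dependent. Independent `A, B`
would have an independent union, so some circuit `C` lies in `A`, say. Deleting an element `e ∈ C`
with `e ∉ B` (or any `e ∈ C` if `C ⊆ B`) leaves the ranks of `A`, `B`, `A ∩ B`, `A ∪ B`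
unchanged, so by induction on `|A ∪ B|` the set `(A ∪ B) \ {e}` lies in `I`, and extension by
`C` puts `A ∪ B` in `I`.
-/

namespace Matroid

variable {α : Type*} {M : Matroid α} {I : Set (Set α)} {A B C S X : Set α} {e : α}

lemma isCircuit'_iff : M.IsCircuit' C ↔ M.IsCircuit C := by
  rw [isCircuit_iff_forall_ssubset, IsCircuit']

lemma rk'_eq_eRk [M.RankFinite] (X : Set α) : (M.rk' X : ℕ∞) = M.eRk X := by
  obtain ⟨J, hJ⟩ := M.exists_isBasis' X
  have hmax : IsGreatest (ncard '' {K | M.Indep K ∧ K ⊆ X}) J.ncard := by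
    refine ⟨⟨J, ⟨hJ.indep, hJ.subset⟩, rfl⟩, ?_⟩
    rintro _ ⟨K, ⟨hK, hKX⟩, rfl⟩
    rw [← Nat.cast_le (α := ℕ∞), hK.finite.cast_ncard_eq, hJ.indep.finite.cast_ncard_eq,
      hJ.encard_eq_eRk]
    exact hK.encard_le_eRk_of_subset hKX
  rw [rk', hmax.csSup_eq, hJ.indep.finite.cast_ncard_eq, hJ.encard_eq_eRk]

lemma modularPairSets_iff [M.RankFinite] :
    M.ModularPairSets A B ↔ M.eRk (A ∩ B) + M.eRk (A ∪ B) = M.eRk A + M.eRk B := by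
  simp only [ModularPairSets, ← rk'_eq_eRk]
  norm_cast

lemma ModularPairSets.symm (h : M.ModularPairSets A B) : M.ModularPairSets B A := by
  rw [ModularPairSets, inter_comm, union_comm, add_comm (M.rk' B)]
  exact h

lemma eRk_insert_eq_of_mem_closure (he : e ∈ M.closure X) : M.eRk (insert e X) = M.eRk X := by
  rw [← eRk_closure_eq, closure_insert_eq_of_mem_closure he, eRk_closure_eq]

lemma IsCircuit.eRk_sdiff_singleton (hC : M.IsCircuit C) (heC : e ∈ C) (hCX : C ⊆ X) :
    M.eRk (X \ {e}) = M.eRk X := by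
  have he : e ∈ M.closure (X \ {e}) :=
    M.closure_subset_closure (sdiff_subset_sdiff_left hCX)
      (hC.mem_closure_sdiff_singleton_of_mem heC)
  rw [← eRk_closure_eq, closure_sdiff_singleton_eq_closure he, eRk_closure_eq]

lemma modularPairSets_of_indep_union [M.RankFinite] (h : M.Indep (A ∪ B)) :
    M.ModularPairSets A B := by
  rw [modularPairSets_iff, (h.subset (inter_subset_left.trans subset_union_left)).eRk_eq_encard,
    h.eRk_eq_encard, (h.subset subset_union_left).eRk_eq_encard,
    (h.subset subset_union_right).eRk_eq_encard, add_comm, encard_union_add_encard_inter]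

lemma Indep.union_indep_of_modularPairSets [M.RankFinite] (hA : M.Indep A) (hB : M.Indep B)
    (h : M.ModularPairSets A B) : M.Indep (A ∪ B) := by
  have hAB : M.Indep (A ∩ B) := hA.subset inter_subset_left
  rw [modularPairSets_iff, hAB.eRk_eq_encard, hA.eRk_eq_encard, hB.eRk_eq_encard,
    ← encard_union_add_encard_inter] at h
  rw [indep_iff_eRk_eq_encard]
  exact WithTop.add_left_cancel hAB.finite.encard_lt_top.ne (h.trans (add_comm _ _))

lemma IsCircuit.modularPairSets_of_subset_insert [M.RankFinite] (hX : M.IsCircuit X)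
    (he : e ∈ X) (hXS : X ⊆ insert e S) : M.ModularPairSets X S := by
  have hXeS : X \ {e} ⊆ X ∩ S := fun x hx ↦ ⟨hx.1, (hXS hx.1).resolve_left hx.2⟩
  have hinter : M.eRk (X ∩ S) = M.eRk X := by
    refine (M.eRk_mono inter_subset_left).antisymm ?_
    calc M.eRk X ≤ M.eRk (M.closure (X ∩ S)) :=
          M.eRk_mono ((hX.subset_closure_sdiff_singleton e).trans (M.closure_subset_closure hXeS))
      _ = M.eRk (X ∩ S) := M.eRk_closure_eq _
  have hunion : M.eRk (X ∪ S) = M.eRk S := by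
    refine le_antisymm ?_ (M.eRk_mono subset_union_right)
    calc M.eRk (X ∪ S) ≤ M.eRk (insert e S) := M.eRk_mono (union_subset hXS (subset_insert e S))
      _ = M.eRk S := eRk_insert_eq_of_mem_closure <| M.closure_subset_closure
          (hXeS.trans inter_subset_right) (hX.mem_closure_sdiff_singleton_of_mem he)
  rw [modularPairSets_iff, hinter, hunion, add_comm]

lemma ModularPairSets.sdiff_singleton [M.RankFinite] (h : M.ModularPairSets A B)
    (hC : M.IsCircuit C) (heC : e ∈ C) (hCA : C ⊆ A) (hCB : e ∉ B ∨ C ⊆ B) :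
    M.ModularPairSets (A \ {e}) (B \ {e}) := by
  have hrk : ∀ X, e ∉ X ∨ C ⊆ X → M.eRk (X \ {e}) = M.eRk X := by
    rintro X (heX | hCX)
    · rw [sdiff_singleton_eq_self heX]
    · exact hC.eRk_sdiff_singleton heC hCX
  have hCAB : e ∉ A ∩ B ∨ C ⊆ A ∩ B := hCB.imp (fun heB h ↦ heB h.2) (subset_inter hCA)
  rw [modularPairSets_iff] at h ⊢
  rw [← sdiff_inter_distrib_right, ← union_sdiff_distrib, hrk _ hCAB,
    hrk _ (Or.inr (hCA.trans subset_union_left)), hrk _ (Or.inr hCA), hrk _ hCB, h]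

lemma ModularIdeal.mem_of_indep [M.RankFinite] (hI : M.ModularIdeal I) (hS : M.Indep S) :
    S ∈ I := by
  obtain ⟨⟨T, hT⟩, hdc, hsing, hunion⟩ := hI
  induction S, hS.finite using Set.Finite.induction_on with
  | empty => exact hdc ∅ T (empty_subset T) hT
  | @insert a S _ _ ih =>
    rw [← singleton_union] at hS ⊢
    exact hunion _ _ (hsing a (hS.subset subset_union_left)) (ih (hS.subset subset_union_right))
      (modularPairSets_of_indep_union hS)

lemma ModularIdeal.modExtByCircuits [M.RankFinite] (hI : M.ModularIdeal I) :
    M.ModExtByCircuits I := by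
  intro X hXI hX S hS e he hXS
  rw [union_singleton] at hXS ⊢
  have hXS' : X ∪ S = insert e S :=
    (union_subset hXS (subset_insert e S)).antisymm (insert_subset (Or.inl he) subset_union_right)
  rw [← hXS']
  exact hI.2.2.2 X S hXI hS ((isCircuit'_iff.1 hX).modularPairSets_of_subset_insert he hXS)

lemma ModularIdeal.linearClass (hI : M.ModularIdeal I) :
    M.LinearClass (I ∩ {C | M.IsCircuit' C}) :=
  ⟨fun _ hC ↦ hC.2, fun X hX Y hY hXY Z hZ hZXY ↦
    ⟨hI.2.1 Z (X ∪ Y) hZXY (hI.2.2.2 X Y hX.1 hY.1 hXY), hZ⟩⟩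

lemma ModExtByCircuits.union_mem [Finite α] (hext : M.ModExtByCircuits I) (hE : M.E = univ)
    (hdc : ∀ A B : Set α, A ⊆ B → B ∈ I → A ∈ I) (hind : ∀ S : Set α, M.Indep S → S ∈ I) (hA : A ∈ I) (hB : B ∈ I) (hAB : M.ModularPairSets A B) :
    A ∪ B ∈ I := by
  induction hn : (A ∪ B).ncard using Nat.strong_induction_on generalizing A B with
  | _ n ih =>
  by_cases hU : M.Indep (A ∪ B)
  · exact hind _ hU
  wlog hAdep : ¬ M.Indep A generalizing A B
  · have hBdep : ¬ M.Indep B := fun hB' ↦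
      hU ((not_not.1 hAdep).union_indep_of_modularPairSets hB' hAB)
    rw [union_comm] at hn hU ⊢
    exact this hB hA hAB.symm hn hU hBdep
  obtain ⟨C, hCA, hC⟩ :=
    ((not_indep_iff (hE ▸ subset_univ A)).1 hAdep).exists_isCircuit_subset
  obtain ⟨e, heC, hCB⟩ : ∃ e ∈ C, e ∉ B ∨ C ⊆ B := by
    by_cases hCB : C ⊆ B
    · exact hC.nonempty.imp fun e he ↦ ⟨he, Or.inr hCB⟩
    · obtain ⟨e, heC, heB⟩ := not_subset.1 hCB
      exact ⟨e, heC, Or.inl heB⟩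
  have heAB : e ∈ A ∪ B := Or.inl (hCA heC)
  have hsmaller : (A \ {e} ∪ B \ {e}).ncard < n := by
    rw [← union_sdiff_distrib, ← hn]
    exact ncard_sdiff_singleton_lt_of_mem heAB
  have hdel := ih _ hsmaller (hdc _ A sdiff_subset hA) (hdc _ B sdiff_subset hB)
    (hAB.sdiff_singleton hC heC hCA hCB) rfl
  rw [← union_sdiff_distrib] at hdel
  have hins := hext C (hdc C A hCA hA) (isCircuit'_iff.2 hC) _ hdel e heC (by
    rw [sdiff_union_self]; exact hCA.trans (subset_union_left.trans subset_union_left))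
  rwa [sdiff_union_self, union_eq_left.2 (singleton_subset_iff.2 heAB)] at hins

end Matroid

/-- A nonempty downward-closed family `I` is a modular ideal of `M` iff its circuits form a
linear class, it contains every independent set, and it satisfies modular extension by
circuits. -/
theorem modularIdeal_iff_linearClass
    {α : Type*} [Fintype α] (M : Matroid α) (hE : M.E = Set.univ)
    (I : Set (Set α)) (hne : I.Nonempty)
    (hdc : ∀ A B : Set α, A ⊆ B → B ∈ I → A ∈ I) :
    M.ModularIdeal I ↔
      (M.LinearClass (I ∩ {C : Set α | M.IsCircuit' C}) ∧
        (∀ S : Set α, M.Indep S → S ∈ I) ∧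
        M.ModExtByCircuits I) := by
  refine ⟨fun hI ↦ ⟨hI.linearClass, fun S ↦ hI.mem_of_indep, hI.modExtByCircuits⟩, ?_⟩
  rintro ⟨-, hind, hext⟩
  exact ⟨hne, hdc, fun e ↦ hind {e}, fun A B hA hB ↦ hext.union_mem hE hdc hind hA hB⟩
end

section
/- Let w : Fin (d+1) → EuclideanSpace ℝ (Fin d) be a family of d + 1 vectors whose span is all of EuclideanSpace ℝ (Fin d). Then there is a unique subset X ⊆ Fin (d+1) that is a circuit of w (a minimal linearly dependent subset), and for every i : Fin (d+1), the family (w j)_{j ≠ i} is linearly independent if and only if i ∈ X. -/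
/-! The linear relations among `d + 1` vectors spanning a `d`-dimensional space form a line, by
rank–nullity; let `c` span it. A subfamily is dependent exactly when it carries a nonzero relation,
that is, when it contains the support of `c`. Hence that support is the unique circuit, and deleting
`i` leaves an independent family exactly when `i` lies in it. -/

open Submodule

section

variable {K V ι : Type*} [Field K] [AddCommGroup V] [Module K V]

theorem Submodule.exists_eq_span_singleton_of_finrank_eq_one {S : Submodule K V}
    (hS : Module.finrank K S = 1) : ∃ c ≠ 0, S = K ∙ c := by
  obtain ⟨c, hcS, hc0⟩ := S.ne_bot_iff.mp (isAtom_iff_finrank_eq_one.2 hS).ne_bot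
  exact ⟨c, hc0, eq_span_singleton_of_mem_of_finrank_eq_one hS hcS hc0⟩

theorem finrank_ker_linearCombination_eq_one [Fintype ι] {w : ι → V}
    (hspan : span K (Set.range w) = ⊤) (hcard : Fintype.card ι = Module.finrank K V + 1) :
    Module.finrank K (LinearMap.ker (Finsupp.linearCombination K w)) = 1 := by
  have hrange : LinearMap.range (Finsupp.linearCombination K w) = ⊤ := by
    rw [Finsupp.range_linearCombination, hspan]
  have := LinearMap.finrank_range_add_finrank_ker (Finsupp.linearCombination K w)
  rw [hrange, finrank_top, Module.finrank_finsupp_self, hcard] at this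
  omega

theorem linearIndepOn_iff_not_support_subset {w : ι → V} {c : ι →₀ K} (hc0 : c ≠ 0)
    (hker : LinearMap.ker (Finsupp.linearCombination K w) = K ∙ c) (s : Set ι) :
    LinearIndepOn K w s ↔ ¬ ↑c.support ⊆ s := by
  rw [linearIndepOn_iff]
  constructor
  · intro hs hcs
    exact hc0 (hs c hcs (by rw [← LinearMap.mem_ker, hker]; exact mem_span_singleton_self c))
  · intro hcs l hls hl
    rw [← LinearMap.mem_ker, hker, mem_span_singleton] at hl
    obtain ⟨a, rfl⟩ := hl
    rcases eq_or_ne a 0 with rfl | ha0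
    · exact zero_smul K c
    rw [Finsupp.mem_supported, Finsupp.support_smul_eq ha0] at hls
    exact (hcs hls).elim

end

theorem isVecCircuit_iff_eq {E : Type*} {d : ℕ} {v : E → EuclideanSpace ℝ (Fin d)}
    {C : Finset E} (hC : ∀ s : Set E, LinearIndepOn ℝ v s ↔ ¬ ↑C ⊆ s) (X : Finset E) :
    IsVecCircuit v X ↔ X = C := by
  have hX : IsVecCircuit v X ↔ C ⊆ X ∧ ∀ Y ⊂ X, ¬ C ⊆ Y := by
    simp only [IsVecCircuit, ← Finset.coe_subset]
    exact and_congr ((not_congr (hC X)).trans not_not) (forall₂_congr fun Y _ ↦ hC Y)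
  rw [hX]
  constructor
  · rintro ⟨hCX, hmin⟩
    by_contra hne
    exact hmin C (hCX.ssubset_of_ne (Ne.symm hne)) subset_rfl
  · rintro rfl
    exact ⟨subset_rfl, fun Y hY hCY ↦ hY.not_subset hCY⟩

/-- A spanning family of `d + 1` vectors in `d`-space has a unique circuit `X`; moreover,
deleting an element `i` leaves a linearly independent family exactly when `i ∈ X`. -/
theorem unique_circuit_of_spanning_succ
    {d : ℕ} (w : Fin (d + 1) → EuclideanSpace ℝ (Fin d))
    (hspan : Submodule.span ℝ (Set.range w) = ⊤) :
    ∃ X : Finset (Fin (d + 1)),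
      (IsVecCircuit w X ∧ ∀ Y : Finset (Fin (d + 1)), IsVecCircuit w Y → Y = X) ∧
      ∀ i : Fin (d + 1),
        (LinearIndependent ℝ (fun j : {j : Fin (d + 1) // j ≠ i} => w j.1) ↔ i ∈ X) := by
  have hcard : Fintype.card (Fin (d + 1)) = Module.finrank ℝ (EuclideanSpace ℝ (Fin d)) + 1 := by
    simp
  have hrank := finrank_ker_linearCombination_eq_one hspan hcard
  obtain ⟨c, hc0, hker⟩ := exists_eq_span_singleton_of_finrank_eq_one hrank
  have hindep := linearIndepOn_iff_not_support_subset hc0 hker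
  have hcircuit := isVecCircuit_iff_eq hindep
  refine ⟨c.support, ⟨(hcircuit _).2 rfl, fun Y hY ↦ (hcircuit Y).1 hY⟩, fun i ↦ ?_⟩
  change LinearIndepOn ℝ w {i}ᶜ ↔ _
  rw [hindep, Set.subset_compl_singleton_iff, not_not, Finset.mem_coe]
end

section
/- Let M be a matroid on a finite ground set E with rank function rk, and let I be a modular ideal of M. Then there exists a matroid N on the same ground set E whose rank function rk_I satisfies, for all S ⊆ E: rk_I(S) = rk(S) if S ∈ I, and rk_I(S) = rk(S) + 1 otherwise. (The function rk_I is the rank function of a matroid, the elementary I-lift of M.) -/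
open Set

/-!
The lifted function `rk_I` satisfies the rank axioms: it vanishes on `∅`, is monotone, grows by
at most one when an element is added, and is submodular; on a finite type such a function is the
rank function of the matroid whose independent sets are the `S` with `rk_I S = |S|`. Modularity
of `I` is what makes `rk_I` submodular: the union of two members of `I` can leave `I` only when
they are not a modular pair, and then the submodular inequality for `rk` is strict and absorbs
the extra `1`. It also makes `rk_I` grow by at most one: if `S ∈ I` but `S ∪ {e} ∉ I`, then
`rk (S ∪ {e}) = rk S`, since otherwise `e` is a non-loop and `S, {e}` is a modular pair.
-/

namespace Matroid

variable {α : Type*}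

section Rank

variable [Finite α] {M : Matroid α} {I X Y : Set α} {e : α}

lemma IsBasis'.rk'_eq_ncard (hI : M.IsBasis' I X) : M.rk' X = I.ncard := by
  refine IsGreatest.csSup_eq ⟨⟨I, ⟨hI.indep, hI.subset⟩, rfl⟩, ?_⟩
  rintro _ ⟨J, ⟨hJ, hJX⟩, rfl⟩
  have hJI := hJ.encard_le_eRk_of_subset hJX
  rw [← hI.encard_eq_eRk, ← J.toFinite.cast_ncard_eq, ← I.toFinite.cast_ncard_eq] at hJI
  exact_mod_cast hJI

lemma cast_rk' (M : Matroid α) (X : Set α) : (M.rk' X : ℕ∞) = M.eRk X := by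
  obtain ⟨I, hI⟩ := M.exists_isBasis' X
  rw [hI.rk'_eq_ncard, I.toFinite.cast_ncard_eq, hI.encard_eq_eRk]

lemma Indep.rk'_eq_ncard (hI : M.Indep I) : M.rk' I = I.ncard := by
  have h := hI.eRk_eq_encard
  rwa [← cast_rk', ← I.toFinite.cast_ncard_eq, Nat.cast_inj] at h

@[simp]
lemma rk'_empty (M : Matroid α) : M.rk' ∅ = 0 := by
  simpa using M.empty_indep.rk'_eq_ncard

lemma rk'_mono (M : Matroid α) (h : X ⊆ Y) : M.rk' X ≤ M.rk' Y := by
  have hXY := M.eRk_mono h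
  rwa [← cast_rk', ← cast_rk', Nat.cast_le] at hXY

lemma rk'_inter_add_rk'_union_le (M : Matroid α) (X Y : Set α) :
    M.rk' (X ∩ Y) + M.rk' (X ∪ Y) ≤ M.rk' X + M.rk' Y := by
  have h := M.eRk_inter_add_eRk_union_le X Y
  simp only [← cast_rk'] at h
  exact_mod_cast h

lemma rk'_insert_le_add_one (M : Matroid α) (e : α) (X : Set α) :
    M.rk' (insert e X) ≤ M.rk' X + 1 := by
  have h := M.eRk_insert_le_add_one e X
  simp only [← cast_rk'] at h
  exact_mod_cast h

lemma rk'_singleton_eq_one_iff : M.rk' {e} = 1 ↔ M.Indep {e} := by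
  rw [indep_singleton, ← eRk_singleton_eq_one_iff, ← cast_rk', Nat.cast_eq_one]

end Rank

structure IsRankFn (f : Set α → ℕ) : Prop where
  map_empty : f ∅ = 0
  mono : Monotone f
  insert_le : ∀ S e, f (insert e S) ≤ f S + 1
  inter_add_union_le : ∀ S T, f (S ∩ T) + f (S ∪ T) ≤ f S + f T

namespace IsRankFn

variable [Finite α] {f : Set α → ℕ} {A B S : Set α} {e : α}

lemma union_le_add_ncard (hf : IsRankFn f) (A D : Set α) : f (A ∪ D) ≤ f A + D.ncard := by
  refine Set.Finite.induction_on D D.toFinite (by simp) ?_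
  intro a D haD _ ih
  rw [union_insert, ncard_insert_of_notMem haD]
  exact (hf.insert_le _ a).trans (Nat.add_le_add_right ih 1)

lemma le_ncard (hf : IsRankFn f) (S : Set α) : f S ≤ S.ncard := by
  simpa [hf.map_empty] using hf.union_le_add_ncard ∅ S

/-- Submodularity lets the elements of `D` be added one at a time. -/
lemma union_eq_of_forall_insert_eq (hf : IsRankFn f) {D : Set α}
    (h : ∀ e ∈ D, f (insert e B) = f B) : f (B ∪ D) = f B := by
  revert h
  refine Set.Finite.induction_on D D.toFinite (fun _ ↦ by simp) ?_
  intro a D _ _ ih h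
  have hD : f (B ∪ D) = f B := ih fun e he ↦ h e (mem_insert_of_mem a he)
  have hsub := hf.inter_add_union_le (B ∪ D) (insert a B)
  have hunion : B ∪ D ∪ insert a B = B ∪ insert a D := by
    rw [union_comm, insert_union, union_insert, ← union_assoc, union_self]
  rw [hunion, hD, h a (mem_insert a D)] at hsub
  have hinter := hf.mono (subset_inter (subset_union_left (t := D)) (subset_insert a B))
  have hge := hf.mono (subset_union_left (s := B) (t := insert a D))
  omega

lemma insert_eq_of_ne_ncard (hf : IsRankFn f) (hA : f A = A.ncard) (he : e ∉ A)
    (h : f (insert e A) ≠ (insert e A).ncard) : f (insert e A) = f A := by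
  rw [ncard_insert_of_notMem he] at h
  have := hf.insert_le A e
  have := hf.mono (subset_insert e A)
  omega

lemma ncard_eq_of_subset (hf : IsRankFn f) (hB : f B = B.ncard) (hAB : A ⊆ B) :
    f A = A.ncard := by
  have hle := hf.union_le_add_ncard A (B \ A)
  rw [union_sdiff_cancel hAB, hB, ← ncard_sdiff_add_ncard_of_subset hAB] at hle
  have := hf.le_ncard A
  omega

lemma exists_insert_ncard_eq (hf : IsRankFn f) (hA : f A = A.ncard) (hB : f B = B.ncard)
    (hlt : A.ncard < B.ncard) : ∃ e ∈ B, e ∉ A ∧ f (insert e A) = (insert e A).ncard := by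
  by_contra! h
  have habs : f (A ∪ B) = f A :=
    hf.union_eq_of_forall_insert_eq fun e heB ↦ by
      by_cases heA : e ∈ A
      · rw [insert_eq_of_mem heA]
      · exact hf.insert_eq_of_ne_ncard hA heA (h e heB heA)
  have := hf.mono (subset_union_right (s := A) (t := B))
  omega

noncomputable def matroid (hf : IsRankFn f) : Matroid α :=
  (IndepMatroid.ofFinite finite_univ (fun S ↦ f S = S.ncard) (by simp [hf.map_empty])
    (fun _ _ hB hAB ↦ hf.ncard_eq_of_subset hB hAB)
    (fun _ _ hA hB hlt ↦ hf.exists_insert_ncard_eq hA hB hlt)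
    (fun S _ ↦ subset_univ S)).matroid

@[simp]
lemma matroid_E (hf : IsRankFn f) : hf.matroid.E = univ := rfl

@[simp]
lemma matroid_indep_iff (hf : IsRankFn f) : hf.matroid.Indep S ↔ f S = S.ncard := Iff.rfl

lemma rk'_matroid (hf : IsRankFn f) (S : Set α) : hf.matroid.rk' S = f S := by
  obtain ⟨B, hB⟩ := hf.matroid.exists_isBasis' S
  have hBf : f B = B.ncard := hf.matroid_indep_iff.mp hB.indep
  rw [hB.rk'_eq_ncard, ← hBf]
  have hS : f (B ∪ S) = f B := hf.union_eq_of_forall_insert_eq fun e heS ↦ by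
    by_cases heB : e ∈ B
    · rw [insert_eq_of_mem heB]
    · exact hf.insert_eq_of_ne_ncard hBf heB
        (mt hf.matroid_indep_iff.mpr (hB.insert_not_indep ⟨heS, heB⟩))
  rw [union_eq_self_of_subset_left hB.subset] at hS
  exact hS.symm

end IsRankFn

section Lift

variable {M : Matroid α} {I : Set (Set α)} {S T : Set α} {e : α}

open scoped Classical in
noncomputable def liftRk (M : Matroid α) (I : Set (Set α)) (S : Set α) : ℕ :=
  M.rk' S + if S ∈ I then 0 else 1

lemma liftRk_of_mem (h : S ∈ I) : M.liftRk I S = M.rk' S := by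
  simp [liftRk, h]

lemma liftRk_of_notMem (h : S ∉ I) : M.liftRk I S = M.rk' S + 1 := by
  simp [liftRk, h]

lemma rk'_le_liftRk (M : Matroid α) (I : Set (Set α)) (S : Set α) : M.rk' S ≤ M.liftRk I S :=
  Nat.le_add_right _ _

lemma liftRk_le_rk'_add_one (M : Matroid α) (I : Set (Set α)) (S : Set α) :
    M.liftRk I S ≤ M.rk' S + 1 := by
  unfold liftRk; split_ifs <;> omega

namespace ModularIdeal

lemma mem_of_subset (hI : M.ModularIdeal I) (hST : S ⊆ T) (hT : T ∈ I) : S ∈ I :=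
  hI.2.1 S T hST hT

lemma singleton_mem (hI : M.ModularIdeal I) (he : M.Indep {e}) : {e} ∈ I :=
  hI.2.2.1 e he

lemma union_mem (hI : M.ModularIdeal I) (hS : S ∈ I) (hT : T ∈ I)
    (hST : M.ModularPairSets S T) : S ∪ T ∈ I :=
  hI.2.2.2 S T hS hT hST

lemma empty_mem (hI : M.ModularIdeal I) : ∅ ∈ I :=
  hI.1.elim fun _ hX ↦ hI.mem_of_subset (empty_subset _) hX

variable [Finite α]

/-- Otherwise `S` and `{e}` would be a modular pair of members of `I` whose union is not in `I`. -/
lemma rk'_insert_eq (hI : M.ModularIdeal I) (hS : S ∈ I) (he : insert e S ∉ I) :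
    M.rk' (insert e S) = M.rk' S := by
  have heS : e ∉ S := fun h ↦ he (by rwa [insert_eq_of_mem h])
  refine (M.rk'_mono (subset_insert e S)).antisymm' ?_
  by_contra! hgrow
  have hsub := M.rk'_inter_add_rk'_union_le S {e}
  rw [union_singleton, inter_singleton_eq_empty.mpr heS, rk'_empty] at hsub
  have hrk : M.rk' {e} = 1 := by
    have := M.rk'_insert_le_add_one e ∅
    simp only [insert_empty_eq, rk'_empty] at this
    omega
  have hpair : M.ModularPairSets S {e} := by
    rw [ModularPairSets, union_singleton, inter_singleton_eq_empty.mpr heS, rk'_empty, hrk]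
    have := M.rk'_insert_le_add_one e S
    omega
  have he_mem := hI.singleton_mem (rk'_singleton_eq_one_iff.mp hrk)
  exact he (union_singleton ▸ hI.union_mem hS he_mem hpair)

lemma liftRk_mono (hI : M.ModularIdeal I) : Monotone (M.liftRk I) := by
  intro S T hST
  by_cases hT : T ∈ I
  · rw [liftRk_of_mem hT, liftRk_of_mem (hI.mem_of_subset hST hT)]
    exact M.rk'_mono hST
  · calc M.liftRk I S ≤ M.rk' S + 1 := M.liftRk_le_rk'_add_one I S
      _ ≤ M.rk' T + 1 := Nat.add_le_add_right (M.rk'_mono hST) 1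
      _ = M.liftRk I T := (liftRk_of_notMem hT).symm

lemma liftRk_insert_le (hI : M.ModularIdeal I) (S : Set α) (e : α) :
    M.liftRk I (insert e S) ≤ M.liftRk I S + 1 := by
  by_cases hT : insert e S ∈ I
  · rw [liftRk_of_mem hT]
    exact (M.rk'_insert_le_add_one e S).trans (Nat.add_le_add_right (M.rk'_le_liftRk I S) 1)
  · by_cases hS : S ∈ I
    · rw [liftRk_of_notMem hT, liftRk_of_mem hS, hI.rk'_insert_eq hS hT]
    · rw [liftRk_of_notMem hT, liftRk_of_notMem hS]
      exact Nat.add_le_add_right (M.rk'_insert_le_add_one e S) 1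

lemma liftRk_inter_add_liftRk_union_le (hI : M.ModularIdeal I) (S T : Set α) :
    M.liftRk I (S ∩ T) + M.liftRk I (S ∪ T) ≤ M.liftRk I S + M.liftRk I T := by
  have hsub := M.rk'_inter_add_rk'_union_le S T
  have hunion := M.liftRk_le_rk'_add_one I (S ∪ T)
  by_cases hS : S ∈ I
  · rw [liftRk_of_mem hS, liftRk_of_mem (hI.mem_of_subset inter_subset_left hS)]
    by_cases hT : T ∈ I
    · rw [liftRk_of_mem hT]
      by_cases hST : M.ModularPairSets S T
      · rw [liftRk_of_mem (hI.union_mem hS hT hST)]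
        exact hST.le
      · have := lt_of_le_of_ne hsub hST
        omega
    · rw [liftRk_of_notMem hT]
      omega
  · have hinter := M.liftRk_le_rk'_add_one I (S ∩ T)
    rw [liftRk_of_notMem hS]
    by_cases hT : T ∈ I
    · rw [liftRk_of_mem hT, liftRk_of_mem (hI.mem_of_subset inter_subset_right hT)]
      omega
    · rw [liftRk_of_notMem hT]
      omega

lemma isRankFn_liftRk (hI : M.ModularIdeal I) : IsRankFn (M.liftRk I) where
  map_empty := by rw [liftRk_of_mem hI.empty_mem, rk'_empty]
  mono := hI.liftRk_mono
  insert_le := hI.liftRk_insert_le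
  inter_add_union_le := hI.liftRk_inter_add_liftRk_union_le

end ModularIdeal

end Lift

end Matroid

/-- For a modular ideal `I` of `M` there is a matroid `N` on the same ground set (the
elementary `I`-lift of `M`) whose rank function is `rk S` for `S ∈ I` and `rk S + 1`
otherwise. -/
theorem exists_elementary_lift
    {α : Type*} [Fintype α] (M : Matroid α) (hE : M.E = Set.univ)
    (I : Set (Set α)) (hI : M.ModularIdeal I) :
    ∃ N : Matroid α, N.E = M.E ∧ ∀ S : Set α,
      (S ∈ I → N.rk' S = M.rk' S) ∧ (S ∉ I → N.rk' S = M.rk' S + 1) := by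
  have hf := hI.isRankFn_liftRk
  refine ⟨hf.matroid, by rw [hf.matroid_E, hE], fun S ↦ ⟨fun hS ↦ ?_, fun hS ↦ ?_⟩⟩
  · rw [hf.rk'_matroid, Matroid.liftRk_of_mem hS]
  · rw [hf.rk'_matroid, Matroid.liftRk_of_notMem hS]
end
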